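/- Sliceness criterion: a function f : Ω_D → ℍ is a slice function if and only if there exists I = (I₁,…,Iₙ) ∈ 𝕊ⁿ with the following property: f(x) = 2^{−n} ∑_{K,H∈𝒫(n)} (−1)^{|K∩H|} J_K ((I_K)^{−1} f(y^{c,H})) for every y = (α₁+I₁β₁,…,αₙ+Iₙβₙ) ∈ Ω_D and every x = (α₁+J₁β₁,…,αₙ+Jₙβₙ) ∈ Ω_D, where α₁,β₁,…,αₙ,βₙ ∈ ℝ and J = (J₁,…,Jₙ) ∈ 𝕊ⁿ. -/

import Mathlib

noncomputable section

abbrev ℍ := Quaternion ℝ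

/-- The sphere of quaternionic imaginary units. -/
def Sph : Set ℍ := {J | J ^ 2 = -1}

/-- The complex slice `ℂ_J = {a + b J : a b : ℝ}`. -/
def CJ (J : ℍ) : Set ℍ := {x | ∃ a b : ℝ, x = (a : ℍ) + (b : ℍ) * J}

variable {n : ℕ}

/-- Conjugation of the `h`-th complex coordinate. -/
def conjCoord (h : Fin n) (z : Fin n → ℂ) : Fin n → ℂ :=
  Function.update z h (starRingEnd ℂ (z h))

/-- Quaternionic conjugation of the coordinates with index in `H`. -/
def conjQ (H : Finset (Fin n)) (x : Fin n → ℍ) : Fin n → ℍ :=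
  fun h => if h ∈ H then star (x h) else x h

/-- Ordered product `J_K` of the values of `J` over `K`, in increasing index order. -/
def JK (J : Fin n → ℍ) (K : Finset (Fin n)) : ℍ :=
  ((K.sort (· ≤ ·)).map J).prod

/-- The complex point with coordinates `α h + i β h`. -/
def zOf (α β : Fin n → ℝ) : Fin n → ℂ :=
  fun h => (α h : ℂ) + (β h : ℂ) * Complex.I

/-- The quaternionic point with coordinates `α h + β h * J h`. -/
def ptOf (α β : Fin n → ℝ) (J : Fin n → ℍ) : Fin n → ℍ :=
  fun h => (α h : ℍ) + (β h : ℍ) * J h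

/-- The circularization `Ω_D` of `D ⊆ ℂⁿ` in `ℍⁿ`. -/
def OmegaD (D : Set (Fin n → ℂ)) : Set (Fin n → ℍ) :=
  {x | ∃ α β : Fin n → ℝ, ∃ J : Fin n → ℍ,
    (∀ h, J h ∈ Sph) ∧ x = ptOf α β J ∧ zOf α β ∈ D}

/-- Invariance of `D` under all coordinatewise complex conjugations. -/
def ConjInv (D : Set (Fin n → ℂ)) : Prop :=
  ∀ h : Fin n, ∀ z ∈ D, conjCoord h z ∈ D

/-- Stem function condition for a family `F = (F_K)`. -/
def IsStem (D : Set (Fin n → ℂ)) (F : Finset (Fin n) → (Fin n → ℂ) → ℍ) : Prop :=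
  ∀ (K : Finset (Fin n)) (h : Fin n), ∀ z ∈ D,
    F K (conjCoord h z) = (if h ∈ K then -1 else 1) * F K z

/-- `f` is the slice function induced by the stem function `F` on `Ω_D`. -/
def Induces (D : Set (Fin n → ℂ)) (F : Finset (Fin n) → (Fin n → ℂ) → ℍ)
    (f : (Fin n → ℍ) → ℍ) : Prop :=
  ∀ (α β : Fin n → ℝ) (J : Fin n → ℍ), (∀ h, J h ∈ Sph) → zOf α β ∈ D →
    f (ptOf α β J) = ∑ K : Finset (Fin n), JK J K * F K (zOf α β)

/-- `f` is a slice function on `Ω_D`. -/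
def IsSlice (D : Set (Fin n → ℂ)) (f : (Fin n → ℍ) → ℍ) : Prop :=
  ∃ F, IsStem D F ∧ Induces D F f

/-- Each component of the stem function is of class `C¹` on `D`. -/
def StemC1 (D : Set (Fin n → ℂ)) (F : Finset (Fin n) → (Fin n → ℂ) → ℍ) : Prop :=
  ∀ K, ContDiffOn ℝ 1 (F K) D

/-- Holomorphy (Cauchy–Riemann system) of a stem function. -/
def StemHolo (D : Set (Fin n → ℂ)) (F : Finset (Fin n) → (Fin n → ℂ) → ℍ) : Prop :=
  ∀ z ∈ D, ∀ h : Fin n, ∀ K : Finset (Fin n), h ∉ K →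
    fderiv ℝ (F K) z (Pi.single h 1) =
      fderiv ℝ (F (insert h K)) z (Pi.single h Complex.I) ∧
    fderiv ℝ (F K) z (Pi.single h Complex.I) =
      -fderiv ℝ (F (insert h K)) z (Pi.single h 1)

/-- `f` is a slice regular function on `Ω_D`. -/
def IsSliceRegular (D : Set (Fin n → ℂ)) (f : (Fin n → ℍ) → ℍ) : Prop :=
  ∃ F, IsStem D F ∧ StemC1 D F ∧ StemHolo D F ∧ Induces D F f

/-- Pointwise product of stem functions associated with `σ`. -/
def SP (σ : Finset (Fin n) → Finset (Fin n) → ℝ)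
    (F G : Finset (Fin n) → (Fin n → ℂ) → ℍ) :
    Finset (Fin n) → (Fin n → ℂ) → ℍ :=
  fun K z => ∑ H : Finset (Fin n), ∑ L : Finset (Fin n),
    if symmDiff H L = K then σ H L • (F H z * G L z) else 0

/-- The tensor-product sign function `σ_⊗(K,H) = (-1)^{|K∩H|}`. -/
def sigmaT : Finset (Fin n) → Finset (Fin n) → ℝ :=
  fun K H => (-1 : ℝ) ^ (K ∩ H).card

/-- The tensor (slice) product of stem functions. -/
def SPT (F G : Finset (Fin n) → (Fin n → ℂ) → ℍ) :
    Finset (Fin n) → (Fin n → ℂ) → ℍ := SP sigmaT F G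

/-- The stem function `∂_h F`. -/
def Dplus (F : Finset (Fin n) → (Fin n → ℂ) → ℍ) (h : Fin n) :
    Finset (Fin n) → (Fin n → ℂ) → ℍ :=
  fun K z => (2 : ℝ)⁻¹ • (fderiv ℝ (F K) z (Pi.single h 1) +
    ((-1 : ℝ) ^ (K ∩ {h}).card) •
      fderiv ℝ (F (symmDiff K {h})) z (Pi.single h Complex.I))

/-- The stem function `∂̄_h F`. -/
def Dminus (F : Finset (Fin n) → (Fin n → ℂ) → ℍ) (h : Fin n) :
    Finset (Fin n) → (Fin n → ℂ) → ℍ :=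
  fun K z => (2 : ℝ)⁻¹ • (fderiv ℝ (F K) z (Pi.single h 1) -
    ((-1 : ℝ) ^ (K ∩ {h}).card) •
      fderiv ℝ (F (symmDiff K {h})) z (Pi.single h Complex.I))

/-- The ordered monomial function `x ↦ x^ℓ a = x₁^{ℓ₁} ⋯ xₙ^{ℓₙ} a`. -/
def mono (ℓ : Fin n → ℕ) (a : ℍ) (x : Fin n → ℍ) : ℍ :=
  (List.ofFn fun h => x h ^ ℓ h).prod * a

/-- The coordinatewise map `φ_J : ℂⁿ → (ℂ_J)ⁿ ⊆ ℍⁿ`. -/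
def phiJ (J : ℍ) (z : Fin n → ℂ) : Fin n → ℍ :=
  fun h => ((z h).re : ℍ) + ((z h).im : ℍ) * J

/-- The standard basis vector `e_K` of `ℝ^{𝒫(n)}`. -/
def eB (K : Finset (Fin n)) : Finset (Fin n) → ℝ := Pi.single K 1

/-- The `Δ`-product on `ℝ^{𝒫(n)}` associated with `σ`. -/
def deltaMulR (σ : Finset (Fin n) → Finset (Fin n) → ℝ)
    (v w : Finset (Fin n) → ℝ) : Finset (Fin n) → ℝ :=
  fun K => ∑ H : Finset (Fin n), ∑ L : Finset (Fin n),
    if symmDiff H L = K then σ H L * v H * w L else 0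

/-!
Conjugating the coordinates indexed by `H` of a point `y = ptOf α β I` of `(ℂ_I)ⁿ` gives
`ptOf α β I'`, where `I'` is `I` with the coordinates in `H` negated, so that
`I'_K = (-1)^{|H ∩ K|} I_K`. For a slice function with stem `F`, the values `f (y^{c,H})` are
therefore the Walsh–Hadamard transform of `L ↦ I_L F_L(z)` on the group `(𝒫(n), ∆)`. This
transform squares to `2ⁿ`, so `F_K(z) = 2⁻ⁿ I_K⁻¹ ∑_H (-1)^{|K ∩ H|} f (y^{c,H})`, which is the
formula. Conversely this expression defines a stem function: conjugating the `h`-th coordinate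
of `z` translates `H` to `H ∆ {h}`, which multiplies the `K`-th coefficient by
`(-1)^{|K ∩ {h}|}`.
-/

section Walsh

variable {α : Type*} [DecidableEq α]

lemma neg_one_pow_card_inter (K H : Finset α) :
    (-1 : ℤ) ^ (K ∩ H).card = ∏ h ∈ K, if h ∈ H then -1 else 1 := by
  rw [Finset.prod_ite_mem, Finset.prod_const]

lemma neg_one_pow_card_inter_symmDiff (K H E : Finset α) :
    (-1 : ℤ) ^ (K ∩ symmDiff H E).card = (-1) ^ (K ∩ E).card * (-1) ^ (K ∩ H).card := by
  simp only [neg_one_pow_card_inter, ← Finset.prod_mul_distrib, Finset.mem_symmDiff]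
  refine Finset.prod_congr rfl fun h _ => ?_
  by_cases hH : h ∈ H <;> by_cases hE : h ∈ E <;> simp [hH, hE]

variable {M : Type*} [Fintype α] [AddCommGroup M]

def walsh (g : Finset α → M) (K : Finset α) : M :=
  ∑ H, (-1 : ℤ) ^ (K ∩ H).card • g H

lemma sum_neg_one_pow_card_inter_mul (K L : Finset α) :
    ∑ H : Finset α, (-1 : ℤ) ^ (K ∩ H).card * (-1) ^ (H ∩ L).card =
      if K = L then 2 ^ Fintype.card α else 0 := by
  have factor : ∀ h, 1 + (if h ∈ K then -1 else 1) * (if h ∈ L then -1 else 1) =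
      if (h ∈ K ↔ h ∈ L) then (2 : ℤ) else 0 := by
    intro h
    split_ifs <;> simp_all
  simp_rw [Finset.inter_comm K, neg_one_pow_card_inter, ← Finset.prod_mul_distrib]
  rw [← Finset.powerset_univ, ← Finset.prod_one_add]
  simp_rw [factor]
  split_ifs with hKL
  · simp [hKL, Finset.card_univ]
  · obtain ⟨h, hh⟩ : ∃ h, ¬(h ∈ K ↔ h ∈ L) := by
      by_contra! hall
      exact hKL (Finset.ext hall)
    exact Finset.prod_eq_zero (Finset.mem_univ h) (if_neg hh)

lemma walsh_walsh (g : Finset α → M) (K : Finset α) :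
    walsh (walsh g) K = (2 : ℤ) ^ Fintype.card α • g K := by
  simp only [walsh, Finset.smul_sum, smul_smul]
  rw [Finset.sum_comm]
  simp_rw [← Finset.sum_smul, sum_neg_one_pow_card_inter_mul, ite_smul, zero_smul]
  simp

lemma walsh_comp_symmDiff (g : Finset α → M) (E K : Finset α) :
    walsh (fun H => g (symmDiff H E)) K = (-1 : ℤ) ^ (K ∩ E).card • walsh g K := by
  rw [walsh, walsh, Finset.smul_sum]
  refine Fintype.sum_bijective (symmDiff · E)
    (Function.Involutive.bijective fun H => symmDiff_symmDiff_cancel_right E H) _ _ fun H => ?_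
  rw [smul_smul, neg_one_pow_card_inter_symmDiff, ← mul_assoc, ← pow_add,
    Even.neg_one_pow ⟨_, rfl⟩, one_mul]

end Walsh

lemma neg_one_pow_mul_eq_zsmul {R : Type*} [Ring R] (k : ℕ) (x : R) :
    (-1 : R) ^ k * x = (-1 : ℤ) ^ k • x := by
  rw [zsmul_eq_mul]
  push_cast
  rfl

lemma inv_two_pow_mul_eq_smul (n : ℕ) (x : ℍ) : ((2 : ℍ) ^ n)⁻¹ * x = ((2 : ℝ) ^ n)⁻¹ • x := by
  rw [Algebra.smul_def, map_inv₀, map_pow, map_ofNat]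

lemma Sph_nonempty : Sph.Nonempty := by
  refine ⟨⟨0, 1, 0, 0⟩, ?_⟩
  change (⟨0, 1, 0, 0⟩ : ℍ) ^ 2 = -1
  erw [sq]
  ext <;> simp

lemma star_eq_neg_of_mem_Sph {J : ℍ} (hJ : J ∈ Sph) : star J = -J := by
  have hJ' : J ^ 2 = -1 := hJ
  have hnorm : Quaternion.normSq J = 1 := by
    have h : Quaternion.normSq J ^ 2 = 1 := by
      rw [← map_pow, hJ', Quaternion.normSq_neg, map_one]
    exact (pow_eq_one_iff_of_nonneg (Quaternion.normSq_nonneg) two_ne_zero).1 h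
  rw [Quaternion.star_eq_neg, ← Quaternion.sq_eq_neg_normSq, hJ', hnorm]
  simp

lemma star_mem_Sph {J : ℍ} (hJ : J ∈ Sph) : star J ∈ Sph := by
  change star J ^ 2 = -1
  rw [← star_pow, show J ^ 2 = -1 from hJ, star_neg, star_one]

lemma ne_zero_of_mem_Sph {J : ℍ} (hJ : J ∈ Sph) : J ≠ 0 := by
  rintro rfl
  simp [Sph] at hJ

lemma List.prod_map_zsmul {ι A : Type*} [Ring A] (l : List ι) (c : ι → ℤ) (J : ι → A) :
    (l.map fun i => c i • J i).prod = (l.map c).prod • (l.map J).prod := by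
  induction l with
  | nil => simp
  | cons a l ih => simp only [List.map_cons, List.prod_cons, ih, smul_mul_smul_comm]

lemma JK_zsmul (c : Fin n → ℤ) (J : Fin n → ℍ) (K : Finset (Fin n)) :
    JK (fun h => c h • J h) K = (∏ h ∈ K, c h) • JK J K := by
  rw [JK, JK, List.prod_map_zsmul, Finset.prod_eq_multiset_prod,
    ← Finset.sort_eq K (· ≤ ·), Multiset.map_coe, Multiset.prod_coe]

lemma JK_conjQ {I : Fin n → ℍ} (hI : ∀ h, star (I h) = -I h) (H K : Finset (Fin n)) :
    JK (conjQ H I) K = (-1 : ℤ) ^ (H ∩ K).card • JK I K := by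
  have hconj : conjQ H I = fun h => (if h ∈ H then -1 else 1 : ℤ) • I h := by
    funext h
    by_cases hh : h ∈ H <;> simp [conjQ, hh, hI]
  rw [hconj, JK_zsmul, Finset.inter_comm, neg_one_pow_card_inter]

lemma JK_ne_zero {I : Fin n → ℍ} (hI : ∀ h, I h ∈ Sph) (K : Finset (Fin n)) : JK I K ≠ 0 :=
  List.prod_ne_zero fun h0 => by
    obtain ⟨h, -, hh⟩ := List.mem_map.1 h0
    exact ne_zero_of_mem_Sph (hI h) hh

lemma conjQ_ptOf (H : Finset (Fin n)) (α β : Fin n → ℝ) (J : Fin n → ℍ) :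
    conjQ H (ptOf α β J) = ptOf α β (conjQ H J) := by
  funext h
  by_cases hh : h ∈ H
  · simp only [conjQ, ptOf, hh, if_true, star_add, star_mul, Quaternion.star_coe]
    rw [Quaternion.coe_commutes]
  · simp [conjQ, ptOf, hh]

lemma conjQ_conjQ (H E : Finset (Fin n)) (x : Fin n → ℍ) :
    conjQ H (conjQ E x) = conjQ (symmDiff H E) x := by
  funext h
  by_cases hH : h ∈ H <;> by_cases hE : h ∈ E <;> simp [conjQ, Finset.mem_symmDiff, hH, hE]

def slicePt (I : Fin n → ℍ) (z : Fin n → ℂ) : Fin n → ℍ :=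
  ptOf (fun h => (z h).re) (fun h => (z h).im) I

lemma slicePt_zOf (I : Fin n → ℍ) (α β : Fin n → ℝ) : slicePt I (zOf α β) = ptOf α β I := by
  simp [slicePt, zOf]

lemma slicePt_conjCoord {I : Fin n → ℍ} (hI : ∀ h, star (I h) = -I h) (a : Fin n)
    (z : Fin n → ℂ) : slicePt I (conjCoord a z) = conjQ {a} (slicePt I z) := by
  funext h
  by_cases hh : h = a
  · subst hh
    simp [slicePt, conjQ, ptOf, conjCoord, hI, Quaternion.coe_commutes]
  · simp [slicePt, conjQ, ptOf, conjCoord, hh]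

def RepresentationFormula (D : Set (Fin n → ℂ)) (f : (Fin n → ℍ) → ℍ) (I : Fin n → ℍ) : Prop :=
  ∀ α β : Fin n → ℝ, zOf α β ∈ D → ∀ J : Fin n → ℍ, (∀ h, J h ∈ Sph) →
    f (ptOf α β J) =
      ((2 : ℍ) ^ n)⁻¹ * ∑ K : Finset (Fin n), ∑ H : Finset (Fin n),
        (-1 : ℍ) ^ (K ∩ H).card * (JK J K * ((JK I K)⁻¹ * f (conjQ H (ptOf α β I))))

lemma representationFormula_sum_eq (I J : Fin n → ℍ) (g : Finset (Fin n) → ℍ) :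
    ((2 : ℍ) ^ n)⁻¹ * ∑ K : Finset (Fin n), ∑ H : Finset (Fin n),
        (-1 : ℍ) ^ (K ∩ H).card * (JK J K * ((JK I K)⁻¹ * g H)) =
      ∑ K, JK J K * (((2 : ℍ) ^ n)⁻¹ * ((JK I K)⁻¹ * walsh g K)) := by
  simp only [walsh, neg_one_pow_mul_eq_zsmul, inv_two_pow_mul_eq_smul, Finset.mul_sum,
    mul_smul_comm]

lemma representationFormula_of_induces {D : Set (Fin n → ℂ)}
    {F : Finset (Fin n) → (Fin n → ℂ) → ℍ} {f : (Fin n → ℍ) → ℍ} (hF : Induces D F f)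
    {I : Fin n → ℍ} (hI : ∀ h, I h ∈ Sph) : RepresentationFormula D f I := by
  intro α β hz J hJ
  have hconj : ∀ H, f (conjQ H (ptOf α β I)) = walsh (fun L => JK I L * F L (zOf α β)) H := by
    intro H
    rw [conjQ_ptOf, hF α β _ (fun h => ?_) hz, walsh]
    · refine Finset.sum_congr rfl fun L _ => ?_
      rw [JK_conjQ (fun h => star_eq_neg_of_mem_Sph (hI h)), smul_mul_assoc]
    · by_cases hh : h ∈ H
      · simpa [conjQ, hh] using star_mem_Sph (hI h)
      · simpa [conjQ, hh] using hI h
  rw [hF α β J hJ hz, representationFormula_sum_eq]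
  simp_rw [hconj, walsh_walsh]
  refine Finset.sum_congr rfl fun K _ => ?_
  rw [mul_smul_comm, inv_mul_cancel_left₀ (JK_ne_zero hI K), inv_two_pow_mul_eq_smul,
    Fintype.card_fin, ← Int.cast_smul_eq_zsmul ℝ, smul_smul]
  norm_num

lemma isSlice_of_representationFormula {D : Set (Fin n → ℂ)} {f : (Fin n → ℍ) → ℍ} {I : Fin n → ℍ}
    (hI : ∀ h, I h ∈ Sph)
    (hformula : RepresentationFormula D f I) :
    IsSlice D f := by
  have hI' : ∀ h, star (I h) = -I h := fun h => star_eq_neg_of_mem_Sph (hI h)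
  refine ⟨fun K z =>
      ((2 : ℍ) ^ n)⁻¹ * ((JK I K)⁻¹ * walsh (fun H => f (conjQ H (slicePt I z))) K),
    fun K a z _ => ?_, fun α β J hJ hz => ?_⟩
  · have hsign : (-1 : ℤ) ^ (K ∩ {a}).card = if a ∈ K then -1 else 1 := by
      by_cases ha : a ∈ K <;>
        simp [ha, Finset.inter_singleton_of_mem, Finset.inter_singleton_of_notMem]
    simp only [slicePt_conjCoord hI', conjQ_conjQ]
    rw [walsh_comp_symmDiff (fun H => f (conjQ H (slicePt I z))), hsign, mul_smul_comm,
      mul_smul_comm, zsmul_eq_mul]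
    split_ifs <;> simp
  · rw [hformula α β hz J hJ, representationFormula_sum_eq]
    simp only [slicePt_zOf]

theorem stmt3_general (n : ℕ) (D : Set (Fin n → ℂ)) (f : (Fin n → ℍ) → ℍ) :
    IsSlice D f ↔
      ∃ I : Fin n → ℍ, (∀ h, I h ∈ Sph) ∧
        ∀ α β : Fin n → ℝ, zOf α β ∈ D →
          ∀ J : Fin n → ℍ, (∀ h, J h ∈ Sph) →
            f (ptOf α β J) =
              ((2 : ℍ) ^ n)⁻¹ * ∑ K : Finset (Fin n), ∑ H : Finset (Fin n),
                (-1 : ℍ) ^ ((K ∩ H).card) *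
                  (JK J K * ((JK I K)⁻¹ * f (conjQ H (ptOf α β I)))) := by
  constructor
  · rintro ⟨F, -, hF⟩
    obtain ⟨J₀, hJ₀⟩ := Sph_nonempty
    exact ⟨fun _ => J₀, fun _ => hJ₀, representationFormula_of_induces hF fun _ => hJ₀⟩
  · rintro ⟨I, hI, hformula⟩
    exact isSlice_of_representationFormula hI hformula

/-- **Sliceness criterion.** -/
theorem stmt3 (n : ℕ) (hn : 0 < n) (D : Set (Fin n → ℂ)) (hne : D.Nonempty)
    (hinv : ConjInv D) (f : (Fin n → ℍ) → ℍ) :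
    IsSlice D f ↔
      ∃ I : Fin n → ℍ, (∀ h, I h ∈ Sph) ∧
        ∀ α β : Fin n → ℝ, zOf α β ∈ D →
          ∀ J : Fin n → ℍ, (∀ h, J h ∈ Sph) →
            f (ptOf α β J) =
              ((2 : ℍ) ^ n)⁻¹ * ∑ K : Finset (Fin n), ∑ H : Finset (Fin n),
                (-1 : ℍ) ^ ((K ∩ H).card) *
                  (JK J K * ((JK I K)⁻¹ * f (conjQ H (ptOf α β I)))) :=
  stmt3_general n D f

end
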